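/- arXiv:2002.06920 — 3 statements merged into one kernel-verified Lean document; each statement's English description precedes it below -/
import Mathlib

section
/- Over an item alphabet with at least four distinct items a, b, c, d, for both the weak and the strong occurrence modes, under partial non-inclusion the soft-embedding containment relation does not dominate the strict-embedding containment relation: there exist an NSP p and a sequence s (namely p = ⟨a ¬(bc) d⟩ with positive singleton itemsets {a}, {d} and negative itemset {b,c}, and s = ⟨a b c d⟩ the list of singleton itemsets {a}, {b}, {c}, {d}) such that p occurs in s under (soft, partial) but not under (strict, partial), in both the weak and strong modes. -/
namespace NSPpaper

/-- A sequence is a finite list of itemsets (finite sets of items). -/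
abbrev Seq (ι : Type*) := List (Finset ι)

/-- `P` is partially non-included in `I`: `P` is empty or some element of `P` is not in `I`. -/
def PartialNonIncl {ι : Type*} (P I : Finset ι) : Prop := P = ∅ ∨ ∃ e ∈ P, e ∉ I

/-- `P` is totally non-included in `I`: no element of `P` is in `I`. -/
def TotalNonIncl {ι : Type*} (P I : Finset ι) : Prop := ∀ e ∈ P, e ∉ I

/-- A negative sequential pattern `⟨p₁ ¬q₁ p₂ ¬q₂ … ¬q_{m-1} p_m⟩`:
nonempty positive itemsets `pos = [p₁, …, p_m]` and negative itemsets
`neg = [q₁, …, q_{m-1}]` (possibly empty itemsets). -/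
structure NSP (ι : Type*) where
  pos : List (Finset ι)
  neg : List (Finset ι)
  pos_ne : pos ≠ []
  pos_nonempty : ∀ P ∈ pos, P.Nonempty
  len : neg.length + 1 = pos.length

variable {ι : Type*}

/-- `e` is an embedding of the positive part `p⁺` of `p` in `s`:
strictly increasing positions with `p_i ⊆ s_{e_i}`. -/
def IsPosEmbedding (p : NSP ι) (s : Seq ι) (e : Fin p.pos.length → Fin s.length) : Prop :=
  StrictMono e ∧ ∀ i, p.pos.get i ⊆ s.get (e i)

/-- Soft embedding w.r.t. the non-inclusion relation `ni`:
an embedding of `p⁺` such that `q_i ⋫ s_j` for every `j` with `e_i < j < e_{i+1}`. -/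
def IsSoftEmbedding (ni : Finset ι → Finset ι → Prop) (p : NSP ι) (s : Seq ι)
    (e : Fin p.pos.length → Fin s.length) : Prop :=
  IsPosEmbedding p s e ∧
  ∀ i : Fin p.neg.length, ∀ j : Fin s.length,
    (e ⟨i.1, by have h1 := p.len; have h2 := i.2; omega⟩).1 < j.1 →
    j.1 < (e ⟨i.1 + 1, by have h1 := p.len; have h2 := i.2; omega⟩).1 →
    ni (p.neg.get i) (s.get j)

/-- Union `⋃_{a < j < b} s_j` of the itemsets of `s` strictly between positions `a` and `b`. -/
def segUnion [DecidableEq ι] (s : Seq ι) (a b : ℕ) : Finset ι :=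
  (Finset.Ioo a b).biUnion (fun j => s.getD j ∅)

/-- Strict embedding w.r.t. the non-inclusion relation `ni`:
an embedding of `p⁺` such that `q_i ⋫ ⋃_{e_i < j < e_{i+1}} s_j`. -/
def IsStrictEmbedding [DecidableEq ι] (ni : Finset ι → Finset ι → Prop) (p : NSP ι) (s : Seq ι)
    (e : Fin p.pos.length → Fin s.length) : Prop :=
  IsPosEmbedding p s e ∧
  ∀ i : Fin p.neg.length,
    ni (p.neg.get i)
      (segUnion s (e ⟨i.1, by have h1 := p.len; have h2 := i.2; omega⟩).1
                  (e ⟨i.1 + 1, by have h1 := p.len; have h2 := i.2; omega⟩).1)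

/-- Embedding type: soft or strict. -/
inductive EmbT | soft | strict

/-- `τ`-embedding (soft or strict) w.r.t. non-inclusion `ni`. -/
def IsEmb [DecidableEq ι] (τ : EmbT) (ni : Finset ι → Finset ι → Prop) (p : NSP ι) (s : Seq ι)
    (e : Fin p.pos.length → Fin s.length) : Prop :=
  match τ with
  | .soft => IsSoftEmbedding ni p s e
  | .strict => IsStrictEmbedding ni p s e

/-- `p` weakly occurs in `s` under `(τ, ni)`: some `τ`-embedding of `p` in `s` exists. -/
def WeakOcc [DecidableEq ι] (τ : EmbT) (ni : Finset ι → Finset ι → Prop)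
    (p : NSP ι) (s : Seq ι) : Prop :=
  ∃ e, IsEmb τ ni p s e

/-- `p` strongly occurs in `s` under `(τ, ni)`: some embedding of `p⁺` in `s` exists and
every embedding of `p⁺` in `s` is a `τ`-embedding of `p`. -/
def StrongOcc [DecidableEq ι] (τ : EmbT) (ni : Finset ι → Finset ι → Prop)
    (p : NSP ι) (s : Seq ι) : Prop :=
  (∃ e, IsPosEmbedding p s e) ∧ ∀ e, IsPosEmbedding p s e → IsEmb τ ni p s e

/-- Occurrence mode: weak or strong. -/
inductive OccMode | weak | strong

/-- `p` occurs in `s` under mode `μ`, embedding type `τ` and non-inclusion `ni`. -/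
def Occurs [DecidableEq ι] (μ : OccMode) (τ : EmbT) (ni : Finset ι → Finset ι → Prop)
    (p : NSP ι) (s : Seq ι) : Prop :=
  match μ with
  | .weak => WeakOcc τ ni p s
  | .strong => StrongOcc τ ni p s

/-- Dominance: `θ ⩾ θ'` iff `p θ s` implies `p θ' s` for every NSP `p` and sequence `s`. -/
def Dominates (θ θ' : NSP ι → Seq ι → Prop) : Prop :=
  ∀ (p : NSP ι) (s : Seq ι), θ p s → θ' p s

/-- The set Θ of the eight containment relations. -/
def Theta (ι : Type*) [DecidableEq ι] : Set (NSP ι → Seq ι → Prop) :=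
  { θ | ∃ (μ : OccMode) (τ : EmbT) (ni : Finset ι → Finset ι → Prop),
      (ni = PartialNonIncl ∨ ni = TotalNonIncl) ∧ θ = Occurs μ τ ni }

/-- `p ⊑ p'`. -/
def NspIncl [DecidableEq ι] (p p' : NSP ι) : Prop :=
  p.pos.length ≤ p'.pos.length ∧
  ∃ u : Fin p.pos.length → Fin p'.pos.length, StrictMono u ∧
    (∀ i, p.pos.get i ⊆ p'.pos.get (u i)) ∧
    (∀ i : Fin p.neg.length,
      p.neg.get i ⊆
        (Finset.Ico (u ⟨i.1, by have h1 := p.len; have h2 := i.2; omega⟩).1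
                    (u ⟨i.1 + 1, by have h1 := p.len; have h2 := i.2; omega⟩).1).biUnion
          (fun j => p'.neg.getD j ∅)) ∧
    (p.pos.length = p'.pos.length →
      (∃ j : Fin p.pos.length, p.pos.get j ≠ p'.pos.getD j.1 ∅) ∨
      (∃ j : Fin p.neg.length, p.neg.get j ≠ p'.neg.getD j.1 ∅))

/-- `p ◁ p'`. -/
def Lhd (p p' : NSP ι) : Prop :=
  p.pos.length ≤ p'.pos.length ∧
  (∀ i : Fin p.pos.length, p.pos.get i ⊆ p'.pos.getD i.1 ∅) ∧
  (∀ i : Fin p.neg.length, p.neg.get i ⊆ p'.neg.getD i.1 ∅) ∧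
  (p.pos.length = p'.pos.length →
    p.pos.getD (p.pos.length - 1) ∅ ≠ p'.pos.getD (p.pos.length - 1) ∅ ∨
    ∃ j : Fin p.neg.length, p.neg.get j ≠ p'.neg.getD j.1 ∅)

/-- `p ⊑⁺ p'`. -/
def NspInclPlus (p p' : NSP ι) : Prop :=
  p.pos.length = p'.pos.length ∧
  (∀ i : Fin p.pos.length, p.pos.get i = p'.pos.getD i.1 ∅) ∧
  (∀ i : Fin p.neg.length, p.neg.get i ⊆ p'.neg.getD i.1 ∅) ∧
  (∃ j : Fin p.neg.length, p.neg.get j ≠ p'.neg.getD j.1 ∅)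

/-- Support of `p` in the dataset `D` w.r.t. the containment relation `θ`:
the number of sequences of `D` in which `p` occurs according to `θ`. -/
noncomputable def supp (θ : NSP ι → Seq ι → Prop) (D : Finset (Seq ι)) (p : NSP ι) : ℕ :=
  letI := Classical.decPred (fun s : Seq ι => θ p s)
  (D.filter fun s => θ p s).card

/-! Every itemset of `s = ⟨a b c d⟩` is a singleton while the negative itemset `{b, c}` has two
elements, so it is contained in no single itemset and every embedding of `p⁺` is soft. On the
other hand `a` and `d` force the only embedding of `p⁺` to use the first and last positions, and
the union of the itemsets strictly between these is `{b, c}`, so no embedding is strict. -/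

theorem partialNonIncl_iff_not_subset {P I : Finset ι} (hP : P.Nonempty) :
    PartialNonIncl P I ↔ ¬ P ⊆ I := by
  rw [PartialNonIncl, Finset.not_subset, or_iff_right hP.ne_empty]

theorem partialNonIncl_of_card_lt {P I : Finset ι} (h : I.card < P.card) : PartialNonIncl P I :=
  (partialNonIncl_iff_not_subset (Finset.card_pos.1 (I.card.zero_le.trans_lt h))).2
    fun hPI => (Finset.card_le_card hPI).not_gt h

theorem isSoftEmbedding_partialNonIncl_of_card_lt {p : NSP ι} {s : Seq ι}
    {e : Fin p.pos.length → Fin s.length} (he : IsPosEmbedding p s e)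
    (hs : ∀ I ∈ s, I.card ≤ 1) (hneg : ∀ N ∈ p.neg, 1 < N.card) :
    IsSoftEmbedding PartialNonIncl p s e :=
  ⟨he, fun _ _ _ _ => partialNonIncl_of_card_lt <|
    (hs _ (List.get_mem _ _)).trans_lt (hneg _ (List.get_mem _ _))⟩

theorem StrongOcc.weakOcc [DecidableEq ι] {τ : EmbT} {ni : Finset ι → Finset ι → Prop}
    {p : NSP ι} {s : Seq ι} (h : StrongOcc τ ni p s) : WeakOcc τ ni p s :=
  let ⟨⟨e, he⟩, hall⟩ := h
  ⟨e, hall e he⟩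

theorem subset_segUnion [DecidableEq ι] {s : Seq ι} {a b j : ℕ} (haj : a < j) (hjb : j < b) :
    s.getD j ∅ ⊆ segUnion s a b :=
  Finset.subset_biUnion_of_mem (fun j => s.getD j ∅) (Finset.mem_Ioo.2 ⟨haj, hjb⟩)

def NSP.pair (P N Q : Finset ι) (hP : P.Nonempty) (hQ : Q.Nonempty) : NSP ι where
  pos := [P, Q]
  neg := [N]
  pos_ne := List.cons_ne_nil _ _
  pos_nonempty := by simp [hP, hQ]
  len := rfl

section pair

variable {P N Q : Finset ι} {hP : P.Nonempty} {hQ : Q.Nonempty} {s : Seq ι}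

theorem NSP.pair_isPosEmbedding_iff {e : Fin 2 → Fin s.length} :
    IsPosEmbedding (NSP.pair P N Q hP hQ) s e ↔
      e 0 < e 1 ∧ P ⊆ s.get (e 0) ∧ Q ⊆ s.get (e 1) := by
  change StrictMono e ∧ (∀ i : Fin 2, _) ↔ _
  simp [Fin.strictMono_iff_lt_succ, Fin.forall_fin_two, NSP.pair]

theorem NSP.pair_isStrictEmbedding_iff [DecidableEq ι] {ni : Finset ι → Finset ι → Prop}
    {e : Fin 2 → Fin s.length} :
    IsStrictEmbedding ni (NSP.pair P N Q hP hQ) s e ↔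
      IsPosEmbedding (NSP.pair P N Q hP hQ) s e ∧ ni N (segUnion s (e 0) (e 1)) := by
  simp [IsStrictEmbedding, NSP.pair]

end pair

theorem soft_not_dominates_strict_partial_general {ι : Type*} [DecidableEq ι]
    (a b c d : ι) (hab : a ≠ b) (hac : a ≠ c)
    (hbc : b ≠ c) (hbd : b ≠ d) (hcd : c ≠ d) :
    ∃ (p : NSP ι) (s : Seq ι),
      p.pos = [{a}, {d}] ∧ p.neg = [{b, c}] ∧ s = [{a}, {b}, {c}, {d}] ∧
      WeakOcc .soft PartialNonIncl p s ∧ StrongOcc .soft PartialNonIncl p s ∧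
      ¬ WeakOcc .strict PartialNonIncl p s ∧ ¬ StrongOcc .strict PartialNonIncl p s := by
  set p := NSP.pair {a} {b, c} {d} (Finset.singleton_nonempty a) (Finset.singleton_nonempty d)
  set s : Seq ι := [{a}, {b}, {c}, {d}]
  have hforced : ∀ e : Fin 2 → Fin 4, IsPosEmbedding p s e → e 0 = 0 ∧ e 1 = 3 := by
    intro e he
    obtain ⟨hlt, ha, hd⟩ := NSP.pair_isPosEmbedding_iff.1 he
    generalize e 0 = i, e 1 = j at hlt ha hd
    fin_cases i <;> fin_cases j <;> simp_all [s]
  have hpos : IsPosEmbedding p s ![0, 3] :=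
    NSP.pair_isPosEmbedding_iff.2 ⟨by simp [s, Fin.lt_def], by simp [s]⟩
  have hsoft : StrongOcc .soft PartialNonIncl p s :=
    ⟨⟨_, hpos⟩, fun e he => isSoftEmbedding_partialNonIncl_of_card_lt he
      (by simp [s]) (by simp [p, NSP.pair, hbc])⟩
  have hbetween : {b, c} ⊆ segUnion s 0 3 :=
    Finset.insert_subset (subset_segUnion (j := 1) one_pos (by norm_num) (by simp [s]))
      (Finset.singleton_subset_iff.2 (subset_segUnion (j := 2) two_pos (by norm_num) (by simp [s])))
  have hstrict : ¬ WeakOcc .strict PartialNonIncl p s := by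
    rintro ⟨e, he⟩
    obtain ⟨hpe, hni⟩ := NSP.pair_isStrictEmbedding_iff.1 he
    obtain ⟨h0, h1⟩ := hforced e hpe
    rw [h0, h1, partialNonIncl_iff_not_subset (Finset.insert_nonempty _ _)] at hni
    exact hni hbetween
  exact ⟨p, s, rfl, rfl, rfl, hsoft.weakOcc, hsoft, hstrict, fun h => hstrict h.weakOcc⟩

/-- under partial non-inclusion, soft-embedding containment does not
dominate strict-embedding containment: with `p = ⟨a ¬(bc) d⟩` and `s = ⟨a b c d⟩`,
`p` occurs in `s` under `(soft, partial)` (weakly and strongly) but not under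
`(strict, partial)` (neither weakly nor strongly). -/
theorem soft_not_dominates_strict_partial {ι : Type*} [DecidableEq ι]
    (a b c d : ι) (hab : a ≠ b) (hac : a ≠ c) (had : a ≠ d)
    (hbc : b ≠ c) (hbd : b ≠ d) (hcd : c ≠ d) :
    ∃ (p : NSP ι) (s : Seq ι),
      p.pos = [{a}, {d}] ∧ p.neg = [{b, c}] ∧ s = [{a}, {b}, {c}, {d}] ∧
      WeakOcc .soft PartialNonIncl p s ∧ StrongOcc .soft PartialNonIncl p s ∧
      ¬ WeakOcc .strict PartialNonIncl p s ∧ ¬ StrongOcc .strict PartialNonIncl p s :=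
  soft_not_dominates_strict_partial_general a b c d hab hac hbc hbd hcd

end NSPpaper
end

section
/- Under total non-inclusion, the soft-embedding and strict-embedding containment relations are equivalent in each occurrence mode: for every NSP p and sequence s, p weakly occurs in s under (soft, total) iff p weakly occurs in s under (strict, total), and p strongly occurs in s under (soft, total) iff p strongly occurs in s under (strict, total). -/
namespace NSPpaper

variable {ι : Type*}

lemma soft_iff_strict_total {ι : Type*} [DecidableEq ι] (p : NSP ι) (s : Seq ι)
    (e : Fin p.pos.length → Fin s.length) :
    IsSoftEmbedding TotalNonIncl p s e ↔ IsStrictEmbedding TotalNonIncl p s e := by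
  constructor
  · rintro ⟨hpos, hns⟩
    refine ⟨hpos, fun i x hx hxu => ?_⟩
    simp only [segUnion, Finset.mem_biUnion, Finset.mem_Ioo] at hxu
    obtain ⟨j, ⟨hj1, hj2⟩, hxj⟩ := hxu
    have hjlt : j < s.length := lt_of_lt_of_le hj2 (e _).isLt.le
    have := hns i ⟨j, hjlt⟩ hj1 hj2 x hx
    rw [List.getD_eq_getElem _ _ hjlt] at hxj
    exact this hxj
  · rintro ⟨hpos, hns⟩
    refine ⟨hpos, fun i j hj1 hj2 x hx hxj => ?_⟩
    refine hns i x hx ?_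
    simp only [segUnion, Finset.mem_biUnion, Finset.mem_Ioo]
    exact ⟨j.1, ⟨hj1, hj2⟩, by rw [List.getD_eq_getElem _ _ j.2]; exact hxj⟩

/-- under total non-inclusion, soft- and strict-embedding containment
relations are equivalent in each occurrence mode. -/
theorem soft_equiv_strict_total {ι : Type*} [DecidableEq ι] (p : NSP ι) (s : Seq ι) :
    (WeakOcc .soft TotalNonIncl p s ↔ WeakOcc .strict TotalNonIncl p s) ∧
    (StrongOcc .soft TotalNonIncl p s ↔ StrongOcc .strict TotalNonIncl p s) := by
  constructor
  · exact exists_congr fun e => soft_iff_strict_total p s e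
  · exact and_congr Iff.rfl (forall_congr' fun e =>
      imp_congr_right fun _ => soft_iff_strict_total p s e)

end NSPpaper
end

section
/- Over an item alphabet with at least five distinct items a, b, c, d, e, none of the eight containment relations is anti-monotonic on (N, ⊑): there exist NSPs p, p' and a sequence s (namely p = ⟨b ¬c a⟩, p' = ⟨b ¬c d a⟩ with singleton itemsets, and s = ⟨b e d c a⟩ the list of singleton itemsets {b}, {e}, {d}, {c}, {a}) such that p ⊑ p' and, for every choice of occurrence mode (weak or strong), embedding type (soft or strict), and non-inclusion relation (partial or total), p' occurs in s but p does not occur in s. -/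
namespace NSPpaper

variable {ι : Type*}

/-! The negative itemsets of `⟨b ¬c a⟩` and `⟨b ¬c d a⟩` have at most one element, and for such
itemsets partial and total non-inclusion agree, as do soft and strict embeddings under total
non-inclusion. So all eight relations reduce to soft embeddings under total non-inclusion, and
only the embeddings of the positive parts into `s = ⟨b e d c a⟩` need to be examined. Every
embedding of `⟨b a⟩` sends `a` to the last itemset and `b` before `c`, so its gap contains `c`;
every embedding of `⟨b d a⟩` sends `d` before `c`, so the gap between `b` and `d` lies inside
`{e}`, and the second negation is empty. -/

theorem partialNonIncl_iff_totalNonIncl {P I : Finset ι} (hP : P.card ≤ 1) :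
    PartialNonIncl P I ↔ TotalNonIncl P I := by
  constructor
  · rintro (rfl | ⟨x, hx, hxI⟩) y hy
    · simp at hy
    · rwa [Finset.card_le_one.1 hP y hy x hx]
  · intro h
    rcases P.eq_empty_or_nonempty with hP | ⟨x, hx⟩
    exacts [Or.inl hP, Or.inr ⟨x, hx, h x hx⟩]

section Embeddings

variable [DecidableEq ι] {τ : EmbT} {ni : Finset ι → Finset ι → Prop} {p : NSP ι} {s : Seq ι}

theorem totalNonIncl_segUnion_iff {P : Finset ι} {m n : ℕ} :
    TotalNonIncl P (segUnion s m n) ↔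
      ∀ j : Fin s.length, m < j.1 → j.1 < n → TotalNonIncl P (s.get j) := by
  simp only [TotalNonIncl, segUnion, Finset.mem_biUnion, Finset.mem_Ioo, not_exists, not_and]
  constructor
  · intro h j hm hn x hx hxj
    exact h x hx j ⟨hm, hn⟩ (by simpa using hxj)
  · intro h x hx j ⟨hm, hn⟩ hxj
    have hj : j < s.length := by
      by_contra hj
      simp [List.getElem?_eq_none (not_lt.mp hj)] at hxj
    exact h ⟨j, hj⟩ hm hn x hx (by simpa [List.getElem?_eq_getElem hj] using hxj)

theorem isEmb_iff_isSoftEmbedding_totalNonIncl {f : Fin p.pos.length → Fin s.length}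
    (hni : ni = PartialNonIncl ∨ ni = TotalNonIncl) (hp : ∀ q ∈ p.neg, q.card ≤ 1) :
    IsEmb τ ni p s f ↔ IsSoftEmbedding TotalNonIncl p s f := by
  have hni_iff : ∀ i : Fin p.neg.length, ∀ I,
      ni (p.neg.get i) I ↔ TotalNonIncl (p.neg.get i) I := by
    rcases hni with rfl | rfl
    exacts [fun i _ => partialNonIncl_iff_totalNonIncl (hp _ (List.get_mem _ i)), fun _ _ => .rfl]
  cases τ
  · simp only [IsEmb, IsSoftEmbedding, hni_iff]
  · simp only [IsEmb, IsStrictEmbedding, IsSoftEmbedding, hni_iff, totalNonIncl_segUnion_iff]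

theorem IsEmb.isPosEmbedding {f : Fin p.pos.length → Fin s.length} (h : IsEmb τ ni p s f) :
    IsPosEmbedding p s f := by
  cases τ
  exacts [h.1, h.1]

theorem occurs_of_forall_isEmb {μ : OccMode} (hex : ∃ f, IsPosEmbedding p s f)
    (hall : ∀ f, IsPosEmbedding p s f → IsEmb τ ni p s f) : Occurs μ τ ni p s := by
  cases μ
  · obtain ⟨f, hf⟩ := hex
    exact ⟨f, hall f hf⟩
  · exact ⟨hex, hall⟩

theorem not_occurs_of_forall_not_isEmb {μ : OccMode} (hex : ∃ f, IsPosEmbedding p s f)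
    (hall : ∀ f, IsPosEmbedding p s f → ¬ IsEmb τ ni p s f) : ¬ Occurs μ τ ni p s := by
  cases μ
  · rintro ⟨f, hf⟩
    exact hall f hf.isPosEmbedding hf
  · rintro ⟨-, hstrong⟩
    obtain ⟨f, hf⟩ := hex
    exact hall f hf (hstrong f hf)

end Embeddings

def pattern (b c a : ι) : NSP ι := ⟨[{b}, {a}], [{c}], by simp, by simp, rfl⟩

def pattern' (b c d a : ι) : NSP ι := ⟨[{b}, {d}, {a}], [{c}, ∅], by simp, by simp, rfl⟩

section Witness

variable {a b c d e : ι}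

theorem nspIncl_pattern_pattern' [DecidableEq ι] : NspIncl (pattern b c a) (pattern' b c d a) := by
  refine ⟨by simp [pattern, pattern'], (![0, 2] : Fin 2 → Fin 3), ?_, ?_, ?_, ?_⟩
  · exact Fin.strictMono_iff_lt_succ.2 fun i => by fin_cases i; simp
  · intro i; fin_cases i <;> simp [pattern, pattern']
  · intro i; fin_cases i; simpa [pattern, pattern'] using ⟨0, by simp, by simp⟩
  · simp [pattern, pattern']

theorem isPosEmbedding_pattern' :
    IsPosEmbedding (pattern' b c d a) [{b}, {e}, {d}, {c}, {a}] (![0, 2, 4] : Fin 3 → Fin 5) :=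
  ⟨Fin.strictMono_iff_lt_succ.2 fun i => by fin_cases i <;> simp,
    fun i => by fin_cases i <;> rfl⟩

theorem isPosEmbedding_pattern :
    IsPosEmbedding (pattern b c a) [{b}, {e}, {d}, {c}, {a}] (![0, 4] : Fin 2 → Fin 5) :=
  ⟨Fin.strictMono_iff_lt_succ.2 fun i => by fin_cases i; simp,
    fun i => by fin_cases i <;> rfl⟩

theorem isSoftEmbedding_pattern' (hcd : c ≠ d) (hce : c ≠ e) {f : Fin 3 → Fin 5}
    (hf : IsPosEmbedding (pattern' b c d a) [{b}, {e}, {d}, {c}, {a}] f) :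
    IsSoftEmbedding TotalNonIncl (pattern' b c d a) [{b}, {e}, {d}, {c}, {a}] f := by
  refine ⟨hf, fun i j hij hji => ?_⟩
  fin_cases i
  · have hij : (f 0).1 < j.1 := hij
    have hji : j.1 < (f 1).1 := hji
    have hd : d ∈ [{b}, {e}, {d}, {c}, {a}].get (f 1) :=
      hf.2 (1 : Fin 3) (Finset.mem_singleton_self d)
    have h12 : f 1 < f 2 := hf.1 (show (1 : Fin 3) < 2 by decide)
    have hf1 : (f 1).1 ≤ 2 := by
      by_contra h
      obtain h3 : f 1 = 3 := Fin.ext (by omega)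
      simp [h3, hcd.symm] at hd
    obtain rfl : j = 1 := Fin.ext (show j.1 = 1 by omega)
    simpa [pattern', TotalNonIncl] using hce
  · simp [pattern', TotalNonIncl]

theorem not_isSoftEmbedding_pattern (hac : a ≠ c) (had : a ≠ d) (hae : a ≠ e) (hbc : b ≠ c)
    {f : Fin 2 → Fin 5} (hf : IsPosEmbedding (pattern b c a) [{b}, {e}, {d}, {c}, {a}] f) :
    ¬ IsSoftEmbedding TotalNonIncl (pattern b c a) [{b}, {e}, {d}, {c}, {a}] f := by
  have hb : b ∈ [{b}, {e}, {d}, {c}, {a}].get (f 0) :=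
    hf.2 (0 : Fin 2) (Finset.mem_singleton_self b)
  have ha : a ∈ [{b}, {e}, {d}, {c}, {a}].get (f 1) :=
    hf.2 (1 : Fin 2) (Finset.mem_singleton_self a)
  have h01 : f 0 < f 1 := hf.1 (show (0 : Fin 2) < 1 by decide)
  have hf1 : f 1 = 4 := by
    revert ha h01; generalize f 1 = k
    fin_cases k <;> simp [*, Fin.lt_def]
  have hf0 : (f 0).1 < 3 := by
    revert hb h01; rw [hf1]; generalize f 0 = k
    fin_cases k <;> simp [*, Fin.lt_def]
  rintro ⟨-, hneg⟩
  exact hneg (0 : Fin 1) (3 : Fin 5) hf0 (show 3 < (f 1).1 by simp [hf1]) c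
    (by simp [pattern]) (by simp)

end Witness

theorem no_antimonotonicity_on_nspIncl_general {ι : Type*} [DecidableEq ι]
    (a b c d e : ι)
    (hac : a ≠ c) (had : a ≠ d) (hae : a ≠ e)
    (hbc : b ≠ c)
    (hcd : c ≠ d) (hce : c ≠ e) :
    ∃ (p p' : NSP ι) (s : Seq ι),
      p.pos = [{b}, {a}] ∧ p.neg = [{c}] ∧
      p'.pos = [{b}, {d}, {a}] ∧ p'.neg = [{c}, ∅] ∧
      s = [{b}, {e}, {d}, {c}, {a}] ∧
      NspIncl p p' ∧
      ∀ (μ : OccMode) (τ : EmbT) (ni : Finset ι → Finset ι → Prop),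
        (ni = PartialNonIncl ∨ ni = TotalNonIncl) →
        Occurs μ τ ni p' s ∧ ¬ Occurs μ τ ni p s := by
  refine ⟨pattern b c a, pattern' b c d a, _, rfl, rfl, rfl, rfl, rfl, nspIncl_pattern_pattern',
    fun μ τ ni hni => ⟨?_, ?_⟩⟩
  · refine occurs_of_forall_isEmb ⟨_, isPosEmbedding_pattern'⟩ fun f hf => ?_
    rw [isEmb_iff_isSoftEmbedding_totalNonIncl hni (by simp [pattern'])]
    exact isSoftEmbedding_pattern' hcd hce hf
  · refine not_occurs_of_forall_not_isEmb ⟨_, isPosEmbedding_pattern⟩ fun f hf => ?_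
    rw [isEmb_iff_isSoftEmbedding_totalNonIncl hni (by simp [pattern])]
    exact not_isSoftEmbedding_pattern hac had hae hbc hf

/-- none of the eight containment relations is anti-monotonic on
`(N, ⊑)`: with `p = ⟨b ¬c a⟩`, `p' = ⟨b ¬c d a⟩` and `s = ⟨b e d c a⟩`, one has
`p ⊑ p'` and, for every occurrence mode, embedding type and non-inclusion relation,
`p'` occurs in `s` but `p` does not. -/
theorem no_antimonotonicity_on_nspIncl {ι : Type*} [DecidableEq ι]
    (a b c d e : ι)
    (hab : a ≠ b) (hac : a ≠ c) (had : a ≠ d) (hae : a ≠ e)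
    (hbc : b ≠ c) (hbd : b ≠ d) (hbe : b ≠ e)
    (hcd : c ≠ d) (hce : c ≠ e) (hde : d ≠ e) :
    ∃ (p p' : NSP ι) (s : Seq ι),
      p.pos = [{b}, {a}] ∧ p.neg = [{c}] ∧
      p'.pos = [{b}, {d}, {a}] ∧ p'.neg = [{c}, ∅] ∧
      s = [{b}, {e}, {d}, {c}, {a}] ∧
      NspIncl p p' ∧
      ∀ (μ : OccMode) (τ : EmbT) (ni : Finset ι → Finset ι → Prop),
        (ni = PartialNonIncl ∨ ni = TotalNonIncl) →
        Occurs μ τ ni p' s ∧ ¬ Occurs μ τ ni p s :=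
  no_antimonotonicity_on_nspIncl_general a b c d e hac had hae hbc hcd hce

end NSPpaper
end
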